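/- arXiv:2504.17555 — 4 statements merged into one kernel-verified Lean document; each statement's English description precedes it below -/
import Mathlib

section
/- Let ℓ, t ∈ ℕ, let G be a subgroup of ℤ^ℓ, and let a₁,...,a_t ∈ ℤ^ℓ be elements not belonging to G. Then there exists a finite index subgroup H of ℤ^ℓ with G ⊆ H and a₁,...,a_t ∉ H. -/
open Filter

open Submodule in
theorem key_avoid {ℓ : ℕ} (G : AddSubgroup (Fin ℓ → ℤ)) {x : Fin ℓ → ℤ} (hx : x ∉ G) :
    ∃ H : AddSubgroup (Fin ℓ → ℤ), H.FiniteIndex ∧ G ≤ H ∧ x ∉ H := by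
  classical
  set N : Submodule ℤ (Fin ℓ → ℤ) := AddSubgroup.toIntSubmodule G with hN
  have hxN : x ∉ N := hx
  obtain ⟨n, ⟨bM, bN, f, d, snf⟩⟩ := N.smithNormalForm (Pi.basisFun ℤ (Fin ℓ))
  -- d i ≠ 0
  have hd : ∀ i, d i ≠ 0 := by
    intro i hdi
    have := snf i
    rw [hdi, zero_smul] at this
    exact bN.ne_zero i (Subtype.coe_injective this)
  -- N equals the span of the generators d i • bM (f i)
  have hNspan : N = span ℤ (Set.range fun i => d i • bM (f i)) := by
    conv_lhs => rw [← Submodule.map_subtype_top N, ← bN.span_eq]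
    rw [Submodule.map_span, ← Set.range_comp]
    congr 1
    ext v
    simp only [Set.mem_range, Function.comp_apply]
    constructor
    · rintro ⟨i, rfl⟩; exact ⟨i, (snf i).symm⟩
    · rintro ⟨i, rfl⟩; exact ⟨i, snf i⟩
  -- coordinates of elements of N
  have hmem : ∀ g ∈ N, (∀ j, j ∉ Set.range f → bM.repr g j = 0) ∧
      (∀ i, d i ∣ bM.repr g (f i)) := by
    intro g hg
    rw [hNspan] at hg
    induction hg using Submodule.span_induction with
    | mem v hv =>
      obtain ⟨i, rfl⟩ := hv
      constructor
      · intro j hj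
        simp only [map_smul, Module.Basis.repr_self, Finsupp.smul_single, smul_eq_mul, mul_one,
          Finsupp.single_apply]
        rw [if_neg]
        intro h; exact hj ⟨i, h⟩
      · intro i'
        simp only [map_smul, Module.Basis.repr_self, Finsupp.smul_single, smul_eq_mul, mul_one,
          Finsupp.single_apply]
        by_cases h : f i = f i'
        · rw [if_pos h]
          have : i = i' := f.injective h
          subst this; exact dvd_rfl
        · rw [if_neg h]; exact dvd_zero _
    | zero => simp
    | add v w _ _ hv hw =>
      refine ⟨fun j hj => ?_, fun i => ?_⟩
      · simp [map_add, hv.1 j hj, hw.1 j hj]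
      · simpa [map_add] using dvd_add (hv.2 i) (hw.2 i)
    | smul c v _ hv =>
      refine ⟨fun j hj => ?_, fun i => ?_⟩
      · rw [map_smul, Finsupp.smul_apply, hv.1 j hj, smul_zero]
      · rw [map_smul, Finsupp.smul_apply, smul_eq_mul]
        exact (hv.2 i).mul_left c
  -- converse: if the coordinates satisfy the conditions, then x ∈ N
  have hbad : ¬ ((∀ j, j ∉ Set.range f → bM.repr x j = 0) ∧
      (∀ i, d i ∣ bM.repr x (f i))) := by
    rintro ⟨h1, h2⟩
    apply hxN
    rw [hNspan]
    have hxsum : x = ∑ i : Fin n, (bM.repr x (f i) / d i) • (d i • bM (f i)) := by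
      apply bM.repr.injective
      ext j
      rw [map_sum]
      simp only [map_smul, Module.Basis.repr_self, Finsupp.smul_single, smul_eq_mul, mul_one,
        Finsupp.coe_finset_sum, Finset.sum_apply, Finsupp.single_apply]
      by_cases hj : j ∈ Set.range f
      · obtain ⟨i₀, rfl⟩ := hj
        rw [Finset.sum_eq_single i₀]
        · rw [if_pos rfl, mul_comm, Int.mul_ediv_cancel' (h2 i₀)]
        · intro i _ hi
          rw [if_neg (fun h => hi (f.injective h))]
        · intro h; exact absurd (Finset.mem_univ i₀) h
      · rw [h1 j hj, Finset.sum_eq_zero]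
        intro i _
        rw [if_neg (fun h => hj ⟨i, h⟩)]
    rw [hxsum]
    exact Submodule.sum_mem _ fun i _ =>
      Submodule.smul_mem _ _ (Submodule.subset_span ⟨i, rfl⟩)
  -- pick the modulus depending on the failing condition
  have hchoice : ∃ m : ℕ, 0 < m ∧
      ((∃ j, j ∉ Set.range f ∧ bM.repr x j ≠ 0 ∧ ¬ (m : ℤ) ∣ bM.repr x j) ∨
       (∃ i, ¬ d i ∣ bM.repr x (f i) ∧ (d i ∣ (m : ℤ)))) := by
    by_cases h1 : ∀ j, j ∉ Set.range f → bM.repr x j = 0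
    · have h2 : ∃ i, ¬ d i ∣ bM.repr x (f i) := by
        by_contra h2
        push_neg at h2
        exact hbad ⟨h1, h2⟩
      obtain ⟨i, hi⟩ := h2
      refine ⟨(d i).natAbs ^ 2, pow_pos (Int.natAbs_pos.mpr (hd i)) 2, Or.inr ⟨i, hi, ?_⟩⟩
      have : d i ∣ ((d i).natAbs : ℤ) := Int.dvd_natAbs.mpr dvd_rfl
      calc d i ∣ ((d i).natAbs : ℤ) := this
        _ ∣ (((d i).natAbs ^ 2 : ℕ) : ℤ) := by push_cast; exact Dvd.intro _ (by ring)
    · push_neg at h1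
      obtain ⟨j, hj, hcj⟩ := h1
      refine ⟨(bM.repr x j).natAbs + 1, Nat.succ_pos _, Or.inl ⟨j, hj, hcj, ?_⟩⟩
      intro hdvd
      apply hcj
      apply Int.eq_zero_of_abs_lt_dvd hdvd
      rw [Int.abs_eq_natAbs]
      exact_mod_cast Nat.lt_succ_self _
  obtain ⟨m, hm0, hcase⟩ := hchoice
  haveI : NeZero m := ⟨hm0.ne'⟩
  -- the kernel of reduction mod m
  set φ : (Fin ℓ → ℤ) →+ (Fin ℓ → ZMod m) := (Int.castAddHom (ZMod m)).compLeft (Fin ℓ) with hφ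
  have hker : ∀ v : Fin ℓ → ℤ, v ∈ φ.ker ↔ ∀ j, (m : ℤ) ∣ v j := by
    intro v
    rw [AddMonoidHom.mem_ker]
    constructor
    · intro h j
      have : φ v j = 0 := by rw [h]; rfl
      rwa [← ZMod.intCast_zmod_eq_zero_iff_dvd]
    · intro h
      funext j
      show ((v j : ℤ) : ZMod m) = 0
      rw [ZMod.intCast_zmod_eq_zero_iff_dvd]
      exact h j
  haveI : Finite (Fin ℓ → ZMod m) := inferInstance
  haveI hFI : φ.ker.FiniteIndex := by
    haveI : Finite φ.range := Set.Finite.to_subtype (Set.toFinite _)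
    exact AddSubgroup.finiteIndex_ker φ
  refine ⟨G ⊔ φ.ker, AddSubgroup.finiteIndex_of_le le_sup_right, le_sup_left, ?_⟩
  -- x is not in the sup
  intro hxH
  rw [AddSubgroup.mem_sup] at hxH
  obtain ⟨g, hg, v, hv, hgv⟩ := hxH
  rw [hker] at hv
  -- v = m • w
  have hvw : ∃ w : Fin ℓ → ℤ, v = (m : ℤ) • w := by
    refine ⟨fun j => v j / m, funext fun j => ?_⟩
    simp only [Pi.smul_apply, smul_eq_mul]
    rw [Int.mul_ediv_cancel' (hv j)]
  obtain ⟨w, rfl⟩ := hvw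
  have hgN : g ∈ N := hg
  have hgprop := hmem g hgN
  have hrepr : ∀ j, bM.repr x j = bM.repr g j + (m : ℤ) * bM.repr w j := by
    intro j
    have h : bM.repr x = bM.repr g + (m : ℤ) • bM.repr w := by
      rw [← hgv, map_add, map_smul]
    rw [h, Finsupp.add_apply, Finsupp.smul_apply, smul_eq_mul]
  rcases hcase with ⟨j, hj, _, hnd⟩ | ⟨i, hi, hdm⟩
  · apply hnd
    rw [hrepr j, hgprop.1 j hj, zero_add]
    exact Dvd.intro _ rfl
  · apply hi
    rw [hrepr (f i)]
    exact dvd_add (hgprop.2 i) (Dvd.dvd.mul_right hdm _)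

theorem finite_index_avoiding (ℓ t : ℕ) (G : AddSubgroup (Fin ℓ → ℤ))
    (a : Fin t → (Fin ℓ → ℤ)) (ha : ∀ i, a i ∉ G) :
    ∃ H : AddSubgroup (Fin ℓ → ℤ), H.FiniteIndex ∧ G ≤ H ∧ ∀ i, a i ∉ H := by
  choose H hFI hle hnm using fun i => key_avoid G (ha i)
  refine ⟨⨅ i, H i, AddSubgroup.finiteIndex_iInf hFI, le_iInf hle, fun i h => ?_⟩
  exact hnm i (iInf_le H i h)
end

section
/- Let p₁, p₂, p₃ be distinct primes and set φ₁(n) = p₁p₂n, φ₂(n) = p₁p₃n, φ₃(n) = p₂p₃n. Then for every (a₁,a₂,a₃) ∈ ℤ³ with a₁p₁p₂ + a₂p₁p₃ + a₃p₂p₃ = 0 and every j ∈ {1,2,3}, |a_j| ≠ 1. -/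
lemma aux_div (q p r : ℕ) (hq : q.Prime) (hp : p.Prime) (hr : r.Prime)
    (hqp : q ≠ p) (hqr : q ≠ r) (a : ℤ) (hd : (q:ℤ) ∣ a * (p * r : ℕ)) :
    |a| ≠ 1 := by
  have hqZ : Prime (q : ℤ) := Nat.prime_iff_prime_int.mp hq
  have h1 : (q:ℤ) ∣ a ∨ (q:ℤ) ∣ ((p*r : ℕ) : ℤ) := hqZ.dvd_mul.mp hd
  have h2 : ¬ (q:ℤ) ∣ ((p*r : ℕ) : ℤ) := by
    rw [Int.natCast_dvd_natCast]
    intro hdvd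
    rcases (Nat.Prime.dvd_mul hq).mp hdvd with h | h
    · exact hqp ((Nat.prime_dvd_prime_iff_eq hq hp).mp h)
    · exact hqr ((Nat.prime_dvd_prime_iff_eq hq hr).mp h)
  have ha : (q:ℤ) ∣ a := h1.resolve_right h2
  intro habs
  have : (q:ℤ) ∣ 1 := by
    rcases (abs_eq (by norm_num : (0:ℤ) ≤ 1)).mp habs with h' | h'
    · rwa [h'] at ha
    · rw [h'] at ha; exact (dvd_neg).mp ha
  have := Int.le_of_dvd one_pos this
  have := hq.two_le
  omega

theorem three_primes_no_unit_coefficient (p₁ p₂ p₃ : ℕ)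
    (hp₁ : p₁.Prime) (hp₂ : p₂.Prime) (hp₃ : p₃.Prime)
    (h12 : p₁ ≠ p₂) (h13 : p₁ ≠ p₃) (h23 : p₂ ≠ p₃)
    (a₁ a₂ a₃ : ℤ)
    (h : a₁ * (p₁ * p₂ : ℕ) + a₂ * (p₁ * p₃ : ℕ) + a₃ * (p₂ * p₃ : ℕ) = 0) :
    |a₁| ≠ 1 ∧ |a₂| ≠ 1 ∧ |a₃| ≠ 1 := by
  refine ⟨aux_div p₃ p₁ p₂ hp₃ hp₁ hp₂ h13.symm h23.symm a₁ ?_,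
          aux_div p₂ p₁ p₃ hp₂ hp₁ hp₃ h12.symm h23 a₂ ?_,
          aux_div p₁ p₂ p₃ hp₁ hp₂ hp₃ h12 h13 a₃ ?_⟩
  · refine ⟨-(a₂ * p₁ + a₃ * p₂), ?_⟩
    push_cast at h ⊢; linarith
  · refine ⟨-(a₁ * p₁ + a₃ * p₃), ?_⟩
    push_cast at h ⊢; linarith
  · refine ⟨-(a₁ * p₂ + a₂ * p₃), ?_⟩
    push_cast at h ⊢; linarith
end

section
/- Let φ₁,...,φ_ℓ : ℕ → ℤ be adequate sequences. Then there exist c ∈ {1,...,ℓ} and indices j₁ < ... < j_c in {1,...,ℓ} such that the sequences φ_{j₁},...,φ_{j_c} are asymptotically linearly independent, and for every j ∈ {1,...,ℓ} there exist (b₁,...,b_c) ∈ ℤ^c \ {0} and b ∈ ℕ with lim_{n→∞}|Σ_{r=1}^c b_r φ_{j_r}(n) − b φ_j(n)| = 0. -/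
open Filter Topology

section Aux
variable {ℓ : ℕ} (φ : Fin ℓ → ℕ → ℤ)

/-- Rational coefficient vectors whose φ-combination is eventually zero. -/
def Wsub : Submodule ℚ (Fin ℓ → ℚ) where
  carrier := {v | ∀ᶠ n in atTop, ∑ j, v j * (φ j n : ℚ) = 0}
  add_mem' := by
    intro a b ha hb
    filter_upwards [ha, hb] with n ha' hb'
    simp only [Pi.add_apply, add_mul, Finset.sum_add_distrib, ha', hb', add_zero]
  zero_mem' := by
    filter_upwards with n
    simp
  smul_mem' := by
    intro c v hv
    filter_upwards [hv] with n h
    simp only [Pi.smul_apply, smul_eq_mul, mul_assoc, ← Finset.mul_sum, h, mul_zero]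

def gq (j : Fin ℓ) : (Fin ℓ → ℚ) ⧸ Wsub φ := (Wsub φ).mkQ (Pi.single j 1)

lemma mem_Wsub_iff (v : Fin ℓ → ℚ) :
    v ∈ Wsub φ ↔ ∀ᶠ n in atTop, ∑ j, v j * (φ j n : ℚ) = 0 := Iff.rfl

lemma mem_Wsub_int (a : Fin ℓ → ℤ) :
    (fun j => (a j : ℚ)) ∈ Wsub φ ↔ ∀ᶠ n in atTop, ∑ j, a j * φ j n = 0 := by
  rw [mem_Wsub_iff]
  apply eventually_congr
  filter_upwards with n
  rw [show ∑ j, ((a j : ℚ)) * ((φ j n : ℤ) : ℚ) = ((∑ j, a j * φ j n : ℤ) : ℚ) by push_cast; rfl]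
  exact Int.cast_eq_zero

lemma gq_ne_zero {j : Fin ℓ} (hj : Tendsto (fun n => |φ j n|) atTop atTop) :
    gq φ j ≠ 0 := by
  intro h
  have hmem : Pi.single j (1:ℚ) ∈ Wsub φ := by
    rw [← Submodule.ker_mkQ (Wsub φ)]
    exact LinearMap.mem_ker.mpr h
  rw [mem_Wsub_iff] at hmem
  have hev : ∀ᶠ n in atTop, (φ j n : ℚ) = 0 := by
    filter_upwards [hmem] with n hn
    simpa [Pi.single_apply, ite_mul, Finset.sum_ite_eq'] using hn
  have hge := hj.eventually_ge_atTop 1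
  obtain ⟨n, h1, h2⟩ := (hev.and hge).exists
  rw [show φ j n = 0 from by exact_mod_cast h1] at h2
  simp at h2

lemma sum_vec {c : ℕ} (js : Fin c → Fin ℓ) (b : Fin c → ℤ) (x : Fin ℓ → ℤ) :
    ∑ j, (∑ r, if js r = j then b r else 0) * x j = ∑ r, b r * x (js r) := by
  simp only [Finset.sum_mul, ite_mul, zero_mul]
  rw [Finset.sum_comm]
  simp [Finset.sum_ite_eq]

lemma cast_vec {c : ℕ} (js : Fin c → Fin ℓ) (b : Fin c → ℤ) :
    (fun j => ((∑ r, if js r = j then b r else 0 : ℤ) : ℚ))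
      = ∑ r, (b r : ℚ) • (Pi.single (js r) (1 : ℚ) : Fin ℓ → ℚ) := by
  funext j
  simp only [Finset.sum_apply, Pi.smul_apply, Pi.single_apply, smul_eq_mul, mul_ite, mul_one,
    mul_zero]
  push_cast
  exact Finset.sum_congr rfl fun r _ => by
    by_cases h : js r = j
    · simp [h]
    · simp [h, Ne.symm h]

lemma cast_single (j : Fin ℓ) (m : ℤ) :
    (fun j' => ((if j = j' then m else 0 : ℤ) : ℚ)) = (m : ℚ) • (Pi.single j (1 : ℚ) : Fin ℓ → ℚ) := by
  funext j'
  by_cases h : j = j'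
  · simp [Pi.single_apply, h]
  · simp [Pi.single_apply, h, Ne.symm h]

lemma mkQ_cast_vec {c : ℕ} (js : Fin c → Fin ℓ) (b : Fin c → ℤ) :
    (Wsub φ).mkQ (fun j => ((∑ r, if js r = j then b r else 0 : ℤ) : ℚ))
      = ∑ r, (b r : ℚ) • gq φ (js r) := by
  rw [cast_vec, map_sum]
  simp only [map_smul]
  rfl

lemma mkQ_cast_single (j : Fin ℓ) (m : ℤ) :
    (Wsub φ).mkQ (fun j' => ((if j = j' then m else 0 : ℤ) : ℚ)) = (m : ℚ) • gq φ j := by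
  rw [cast_single, map_smul]
  rfl

end Aux

/-- The sequences `φ j : ℕ → ℤ`, `j < ℓ`, are adequate. -/
def Adequate {ℓ : ℕ} (φ : Fin ℓ → ℕ → ℤ) : Prop :=
  (∀ j, Tendsto (fun n => |φ j n|) atTop atTop) ∧
    ∀ a : Fin ℓ → ℤ,
      Tendsto (fun n => ∑ j, a j * φ j n) atTop (𝓝 0) ∨
        Tendsto (fun n => |∑ j, a j * φ j n|) atTop atTop

theorem exists_asymptotically_independent_subfamily (ℓ : ℕ) (hℓ : 0 < ℓ)
    (φ : Fin ℓ → ℕ → ℤ) (hφ : Adequate φ) :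
    ∃ c : ℕ, 1 ≤ c ∧ c ≤ ℓ ∧ ∃ js : Fin c → Fin ℓ, StrictMono js ∧
      (∀ b : Fin c → ℤ, b ≠ 0 →
        Tendsto (fun n => |∑ r, b r * φ (js r) n|) atTop atTop) ∧
      ∀ j : Fin ℓ, ∃ b : Fin c → ℤ, b ≠ 0 ∧ ∃ m : ℕ, 0 < m ∧
        Tendsto (fun n => (∑ r, b r * φ (js r) n) - (m : ℤ) * φ j n) atTop (𝓝 0) := by
  classical
  obtain ⟨hφ1, hφ2⟩ := hφ
  -- choose a linearly independent spanning subset of the range of gq φ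
  obtain ⟨B, hBsub, hBspan, hBli⟩ := exists_linearIndependent ℚ (Set.range (gq φ))
  have hBfin : B.Finite := (Set.finite_range (gq φ)).subset hBsub
  set f : ((Fin ℓ → ℚ) ⧸ Wsub φ) → Fin ℓ :=
    fun v => if h : ∃ j, gq φ j = v then h.choose else ⟨0, hℓ⟩ with hfdef
  have hf : ∀ v ∈ B, gq φ (f v) = v := by
    intro v hv
    have h : ∃ j, gq φ j = v := hBsub hv
    simp only [hfdef, dif_pos h]
    exact h.choose_spec
  set s : Finset (Fin ℓ) := hBfin.toFinset.image f with hsdef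
  have hmem_s : ∀ i ∈ s, ∃ v ∈ B, f v = i := by
    intro i hi
    simp only [hsdef, Finset.mem_image, Set.Finite.mem_toFinset] at hi
    exact hi
  have hfg : ∀ i ∈ s, gq φ i ∈ B ∧ f (gq φ i) = i := by
    intro i hi
    obtain ⟨v, hv, rfl⟩ := hmem_s i hi
    rw [hf v hv]
    exact ⟨hv, rfl⟩
  have himg : gq φ '' ↑s = B := by
    ext v
    constructor
    · rintro ⟨i, hi, rfl⟩
      exact (hfg i hi).1
    · intro hv
      refine ⟨f v, ?_, hf v hv⟩
      simp only [hsdef, Finset.coe_image, Set.Finite.coe_toFinset]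
      exact ⟨v, hv, rfl⟩
  -- linear independence of the family indexed by s
  have he : Function.Injective (fun i : ↥s => (⟨gq φ i, (hfg i i.2).1⟩ : ↥B)) := by
    intro i₁ i₂ h
    have h' : gq φ (i₁ : Fin ℓ) = gq φ (i₂ : Fin ℓ) := congrArg Subtype.val h
    have := (hfg i₁ i₁.2).2
    rw [h', (hfg i₂ i₂.2).2] at this
    exact Subtype.ext this.symm
  have hli_s : LinearIndependent ℚ (fun i : ↥s => gq φ i) :=
    hBli.comp _ he
  -- every gq φ j is in the span
  have hspan : ∀ j, gq φ j ∈ Submodule.span ℚ (gq φ '' ↑s) := by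
    intro j
    rw [himg, hBspan]
    exact Submodule.subset_span ⟨j, rfl⟩
  -- s is nonempty
  have hsne : s.Nonempty := by
    rcases s.eq_empty_or_nonempty with h | h
    · exfalso
      have h0 := hspan ⟨0, hℓ⟩
      rw [h] at h0
      simp only [Finset.coe_empty, Set.image_empty, Submodule.span_empty,
        Submodule.mem_bot] at h0
      exact gq_ne_zero φ (hφ1 _) h0
    · exact h
  set js : Fin s.card → Fin ℓ := fun r => s.orderEmbOfFin rfl r with hjsdef
  have hjs_mem : ∀ r, js r ∈ s := fun r => s.orderEmbOfFin_mem rfl r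
  have hli_js : LinearIndependent ℚ (fun r => gq φ (js r)) :=
    hli_s.comp (fun r => ⟨js r, hjs_mem r⟩)
      (fun r1 r2 h => (s.orderEmbOfFin rfl).injective (congrArg Subtype.val h))
  have hrange : Set.range (fun r => gq φ (js r)) = gq φ '' ↑s := by
    rw [show (fun r => gq φ (js r)) = gq φ ∘ js from rfl, Set.range_comp, hjsdef]
    rw [show Set.range (fun r => s.orderEmbOfFin rfl r) = Set.range ⇑(s.orderEmbOfFin rfl) from rfl,
      Finset.range_orderEmbOfFin]
  refine ⟨s.card, Finset.card_pos.mpr hsne, by simpa using Finset.card_le_card s.subset_univ,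
    js, (s.orderEmbOfFin rfl).strictMono, ?_, ?_⟩
  · -- asymptotic linear independence
    intro b hb
    have key : (∑ r, (b r : ℚ) • gq φ (js r)) ≠ 0 := by
      intro h0
      have hz := Fintype.linearIndependent_iff.mp hli_js (fun r => (b r : ℚ)) h0
      apply hb
      funext r
      have h1 : ((b r : ℚ)) = 0 := hz r
      show b r = (0 : ℤ)
      exact_mod_cast h1
    set a : Fin ℓ → ℤ := fun j => ∑ r, if js r = j then b r else 0 with hadef
    have hnot : ¬ ∀ᶠ n in atTop, ∑ j, a j * φ j n = 0 := by
      intro hev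
      have hWmem : (fun j => ((a j : ℚ))) ∈ Wsub φ := (mem_Wsub_int φ a).mpr hev
      have h0 : (Wsub φ).mkQ (fun j => ((a j : ℚ))) = 0 := by
        rw [← Submodule.ker_mkQ (Wsub φ)] at hWmem
        exact LinearMap.mem_ker.mp hWmem
      rw [show (fun j => ((a j : ℚ)))
          = (fun j => ((∑ r, if js r = j then b r else 0 : ℤ) : ℚ)) from rfl,
        mkQ_cast_vec] at h0
      exact key h0
    rcases hφ2 a with h | h
    · rw [nhds_discrete, tendsto_pure] at h
      exact absurd h hnot
    · have heq : (fun n => |∑ r, b r * φ (js r) n|) = fun n => |∑ j, a j * φ j n| :=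
        funext fun n => congrArg abs (sum_vec js b (fun j' => φ j' n)).symm
      rw [heq]
      exact h
  · -- spanning with positive integer coefficient
    intro j
    have hj' := hspan j
    rw [← hrange] at hj'
    obtain ⟨q, hq⟩ := (Submodule.mem_span_range_iff_exists_fun ℚ).mp hj'
    set m : ℕ := ∏ r, (q r).den with hmdef
    have hm : 0 < m := Finset.prod_pos fun r _ => (q r).pos
    have hdvd : ∀ r, (q r).den ∣ m := fun r => Finset.dvd_prod_of_mem _ (Finset.mem_univ r)
    set b : Fin s.card → ℤ := fun r => (q r).num * ((m / (q r).den : ℕ) : ℤ) with hbdef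
    have hbq : ∀ r, ((b r : ℚ)) = q r * m := by
      intro r
      have hk : ((q r).den * (m / (q r).den) : ℕ) = m := Nat.mul_div_cancel' (hdvd r)
      have hk' : ((q r).den : ℚ) * ((m / (q r).den : ℕ) : ℚ) = (m : ℚ) := by
        exact_mod_cast congrArg (Nat.cast : ℕ → ℚ) hk
      rw [hbdef]
      rw [Int.cast_mul, Int.cast_natCast, ← hk', ← mul_assoc, Rat.mul_den_eq_num]
    have hbne : b ≠ 0 := by
      intro h0
      have hq0 : ∀ r, q r = 0 := by
        intro r
        have hbr := hbq r
        rw [h0] at hbr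
        simp only [Pi.zero_apply, Int.cast_zero] at hbr
        rcases mul_eq_zero.mp hbr.symm with h | h
        · exact h
        · exact absurd h (by positivity)
      have : gq φ j = 0 := by
        rw [← hq]
        simp [hq0]
      exact gq_ne_zero φ (hφ1 j) this
    set A : Fin ℓ → ℤ :=
      fun j' => (∑ r, if js r = j' then b r else 0) - (if j = j' then (m : ℤ) else 0) with hAdef
    have hAq : (fun j' => ((A j' : ℚ)))
        = (fun j' => ((∑ r, if js r = j' then b r else 0 : ℤ) : ℚ))
          - (fun j' => ((if j = j' then (m : ℤ) else 0 : ℤ) : ℚ)) := by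
      funext j'
      simp only [hAdef, Pi.sub_apply]
      push_cast
      ring
    have hmkQ : (Wsub φ).mkQ (fun j' => ((A j' : ℚ))) = 0 := by
      rw [hAq, map_sub, mkQ_cast_vec, mkQ_cast_single, ← hq, Finset.smul_sum,
        ← Finset.sum_sub_distrib]
      apply Finset.sum_eq_zero
      intro r _
      rw [smul_smul, hbq r, show (((m : ℕ) : ℤ) : ℚ) = ((m : ℕ) : ℚ) from by push_cast; rfl,
        mul_comm ((m : ℕ) : ℚ) (q r), sub_self]
    have hWmem : (fun j' => ((A j' : ℚ))) ∈ Wsub φ := by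
      have h1 := LinearMap.mem_ker.mpr hmkQ
      rwa [Submodule.ker_mkQ] at h1
    have hev : ∀ᶠ n in atTop, ∑ j', A j' * φ j' n = 0 := (mem_Wsub_int φ A).mp hWmem
    refine ⟨b, hbne, m, hm, ?_⟩
    rw [nhds_discrete, tendsto_pure]
    filter_upwards [hev] with n hn
    have hsplit : ∑ j', A j' * φ j' n = (∑ r, b r * φ (js r) n) - (m : ℤ) * φ j n := by
      simp only [hAdef, sub_mul, Finset.sum_sub_distrib]
      congr 1
      · exact sum_vec js b (fun j' => φ j' n)
      · simp [ite_mul, Finset.sum_ite_eq]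
    rw [← hsplit]
    exact hn
end

section
/- Let ψ₁,...,ψ_ℓ : ℕ → ℤ be arbitrary sequences. Then there exists an increasing sequence (n_k) in ℕ such that for every (a₁,...,a_ℓ) ∈ ℤ^ℓ, the sequence k ↦ Σ_{j=1}^ℓ a_j ψ_j(n_k) converges in ℤ ∪ {−∞, +∞} (i.e., is eventually constant, or tends to +∞, or tends to −∞). -/
open Filter Topology

private lemma int_eventually_const_of_tendsto {g : ℕ → ℤ} {x : ℝ}
    (h : Tendsto (fun k => (g k : ℝ)) atTop (𝓝 x)) :
    ∃ m : ℤ, ∀ᶠ k in atTop, g k = m := by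
  rw [Metric.tendsto_atTop] at h
  obtain ⟨N, hN⟩ := h (1/2) (by norm_num)
  refine ⟨g N, eventually_atTop.2 ⟨N, fun k hk => ?_⟩⟩
  have h1 := hN k hk
  have h2 := hN N le_rfl
  rw [Real.dist_eq] at h1 h2
  have hr : |(g k : ℝ) - (g N : ℝ)| < 1 := by
    calc |(g k : ℝ) - (g N : ℝ)| ≤ |(g k : ℝ) - x| + |x - (g N : ℝ)| := abs_sub_le _ _ _
      _ < 1/2 + 1/2 := by rw [abs_sub_comm x]; exact add_lt_add h1 h2
      _ = 1 := by norm_num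
  have hz : |g k - g N| < 1 := by exact_mod_cast (by push_cast; exact hr : |((g k - g N : ℤ) : ℝ)| < 1)
  have := abs_lt.1 hz
  omega

theorem exists_subsequence_all_combinations_converge (ℓ : ℕ) (ψ : Fin ℓ → ℕ → ℤ) :
    ∃ n : ℕ → ℕ, StrictMono n ∧
      ∀ a : Fin ℓ → ℤ,
        (∃ m : ℤ, ∀ᶠ k in atTop, (∑ j, a j * ψ j (n k)) = m) ∨
          Tendsto (fun k => ∑ j, a j * ψ j (n k)) atTop atTop ∨
          Tendsto (fun k => ∑ j, a j * ψ j (n k)) atTop atBot := by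
  classical
  set F : ℕ → ((Fin ℓ → ℤ) → EReal) :=
    fun n a => (((∑ j, a j * ψ j n : ℤ) : ℝ) : EReal) with hF
  obtain ⟨L, -, φ, hφ, hlim⟩ :=
    isCompact_univ.tendsto_subseq (x := F) (fun n => Set.mem_univ _)
  refine ⟨φ, hφ, fun a => ?_⟩
  have ha : Tendsto (fun k => (((∑ j, a j * ψ j (φ k) : ℤ) : ℝ) : EReal)) atTop (𝓝 (L a)) :=
    tendsto_pi_nhds.1 hlim a
  revert ha
  induction L a using EReal.rec with
  | bot =>
    intro ha
    rw [EReal.tendsto_nhds_bot_iff_real] at ha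
    refine Or.inr (Or.inr (tendsto_atBot.2 fun b => ?_))
    filter_upwards [ha (b : ℝ)] with k hk
    have : ((∑ j, a j * ψ j (φ k) : ℤ) : ℝ) < (b : ℝ) := by exact_mod_cast hk
    exact_mod_cast this.le
  | coe x =>
    intro ha
    rw [EReal.tendsto_coe] at ha
    exact Or.inl (int_eventually_const_of_tendsto ha)
  | top =>
    intro ha
    rw [EReal.tendsto_nhds_top_iff_real] at ha
    refine Or.inr (Or.inl (tendsto_atTop.2 fun b => ?_))
    filter_upwards [ha (b : ℝ)] with k hk
    have : (b : ℝ) < ((∑ j, a j * ψ j (φ k) : ℤ) : ℝ) := by exact_mod_cast hk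
    exact_mod_cast this.le
end
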